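/- arXiv:2008.00856 — 3 statements merged into one kernel-verified Lean document; each statement's English description precedes it below -/
import Mathlib

section
/- Fix d ≥ 2 and let k : ℕ → ℕ satisfy k(N)/N → 0 as N → ∞ (with k(N) ≤ N). Then C(N, k(N)) / C(d²+N-1, k(N)) → 1 as N → ∞. -/
open Filter

lemma choose_ratio_bound (n k j : ℕ) (hk : k ≤ n) :
    (((n + j).choose k : ℕ) : ℝ) ≤ (n.choose k : ℝ) * (((n : ℝ) + 1) / ((n : ℝ) + 1 - k)) ^ j := by
  have hkr : (k : ℝ) ≤ n := by exact_mod_cast hk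
  have hden : (0:ℝ) < (n:ℝ) + 1 - k := by linarith
  induction j with
  | zero => simp
  | succ j ih =>
    have hden2 : (0:ℝ) < (n:ℝ) + j + 1 - k := by
      have : (0:ℝ) ≤ j := by positivity
      linarith
    have hkle : k ≤ n + j + 1 := by omega
    have hid : ((n + j).choose k : ℝ) * ((n:ℝ) + j + 1) =
        ((n + j + 1).choose k : ℝ) * ((n:ℝ) + j + 1 - k) := by
      have hc := Nat.choose_mul_succ_eq (n + j) k
      have hc' : (((n + j).choose k : ℕ) : ℝ) * (((n + j + 1 : ℕ)) : ℝ)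
          = (((n + j + 1).choose k : ℕ) : ℝ) * (((n + j + 1 - k : ℕ)) : ℝ) := by
        exact_mod_cast congrArg (Nat.cast (R := ℝ)) hc
      rw [Nat.cast_sub hkle] at hc'
      push_cast at hc' ⊢
      linarith
    have heq : ((n + j + 1).choose k : ℝ)
        = ((n + j).choose k : ℝ) * (((n:ℝ) + j + 1) / ((n:ℝ) + j + 1 - k)) := by
      field_simp
      linarith
    have hfac : ((n:ℝ) + j + 1) / ((n:ℝ) + j + 1 - k) ≤ ((n:ℝ) + 1) / ((n:ℝ) + 1 - k) := by
      rw [div_le_div_iff₀ hden2 hden]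
      have hj : (0:ℝ) ≤ j := by positivity
      nlinarith
    have hpos : (0:ℝ) ≤ ((n:ℝ) + j + 1) / ((n:ℝ) + j + 1 - k) := by positivity
    calc ((n + (j+1)).choose k : ℝ)
        = ((n + j).choose k : ℝ) * (((n:ℝ) + j + 1) / ((n:ℝ) + j + 1 - k)) := by
          rw [show n + (j+1) = n + j + 1 from rfl, heq]
      _ ≤ ((n.choose k : ℝ) * (((n : ℝ) + 1) / ((n : ℝ) + 1 - k)) ^ j)
            * (((n:ℝ) + 1) / ((n:ℝ) + 1 - k)) := by
          apply mul_le_mul ih hfac hpos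
          positivity
      _ = (n.choose k : ℝ) * (((n : ℝ) + 1) / ((n : ℝ) + 1 - k)) ^ (j+1) := by ring

theorem stmt_4 (d : ℕ) (hd : 2 ≤ d) (k : ℕ → ℕ) (hk : ∀ N, k N ≤ N)
    (h0 : Tendsto (fun N : ℕ => (k N : ℝ) / N) atTop (nhds 0)) :
    Tendsto (fun N : ℕ =>
        (N.choose (k N) : ℝ) / ((d ^ 2 + N - 1).choose (k N) : ℝ))
      atTop (nhds 1) := by
  have hd2 : 1 ≤ d ^ 2 := Nat.one_le_pow _ _ (by omega)
  set c := d ^ 2 - 1 with hc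
  have hM : ∀ N, d ^ 2 + N - 1 = N + c := by intro N; omega
  -- k N / (N+1) → 0
  have h0' : Tendsto (fun N : ℕ => (k N : ℝ) / ((N : ℝ) + 1)) atTop (nhds 0) := by
    apply tendsto_of_tendsto_of_tendsto_of_le_of_le' tendsto_const_nhds h0
    · filter_upwards with N; positivity
    · filter_upwards [eventually_ge_atTop 1] with N hN
      apply div_le_div_of_nonneg_left (by positivity) (by exact_mod_cast hN)
      have : (1:ℝ) ≤ N := by exact_mod_cast hN
      linarith
  -- (N+1 - kN)/(N+1) → 1
  have h1 : Tendsto (fun N : ℕ => (((N:ℝ) + 1 - k N) / ((N:ℝ) + 1))) atTop (nhds 1) := by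
    have : (fun N : ℕ => (((N:ℝ) + 1 - k N) / ((N:ℝ) + 1)))
        = fun N : ℕ => 1 - (k N : ℝ) / ((N:ℝ) + 1) := by
      funext N
      have hpos : ((N:ℝ) + 1) ≠ 0 := by positivity
      field_simp
    rw [this]
    simpa using (tendsto_const_nhds (x := (1:ℝ))).sub h0'
  have h2 : Tendsto (fun N : ℕ => (((N:ℝ) + 1) / ((N:ℝ) + 1 - k N)) ^ c) atTop (nhds 1) := by
    have := (h1.inv₀ one_ne_zero).pow c
    simp only [inv_div, inv_one, one_pow] at this
    exact this
  -- ratio C(N+c,k)/C(N,k) → 1 by squeeze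
  have hf : Tendsto (fun N : ℕ => (((N + c).choose (k N) : ℝ) / (N.choose (k N) : ℝ)))
      atTop (nhds 1) := by
    apply tendsto_of_tendsto_of_tendsto_of_le_of_le' tendsto_const_nhds h2
    · filter_upwards with N
      have hpos : (0:ℝ) < (N.choose (k N) : ℝ) := by
        exact_mod_cast Nat.choose_pos (hk N)
      rw [le_div_iff₀ hpos, one_mul]
      exact_mod_cast Nat.choose_le_choose (k N) (Nat.le_add_right N c)
    · filter_upwards with N
      have hpos : (0:ℝ) < (N.choose (k N) : ℝ) := by
        exact_mod_cast Nat.choose_pos (hk N)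
      rw [div_le_iff₀ hpos]
      have := choose_ratio_bound N (k N) c (hk N)
      linarith
  have hgoal := hf.inv₀ one_ne_zero
  simp only [inv_one] at hgoal
  have heq : (fun N : ℕ =>
        (N.choose (k N) : ℝ) / ((d ^ 2 + N - 1).choose (k N) : ℝ))
      = fun N : ℕ => (((N + c).choose (k N) : ℝ) / (N.choose (k N) : ℝ))⁻¹ := by
    funext N
    rw [hM N, inv_div]
  rw [heq]
  exact hgoal
end

section
/- Fix a > 0. With k(N) = ⌊a·N^{2/3}⌋, one has lim_{N→∞} cos(π/(N/k(N)+2))^{2·k(N)} = exp(-π²·a³). -/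
/-!
With `k = ⌊a N^{2/3}⌋₊` and `θ = π / (N / k + 2)` we have `θ → 0` and
`k θ² = π² (k³ / N²) / (1 + 2 k / N)² → π² a³`, because `k³ / N² → a³` and `k / N → 0`.
The limit then follows from `cos θ = 1 - θ² / 2 + O(θ⁴)` and from `(1 + x)^m → exp t` whenever
`x → 0` and `m x → t`, which holds since `(1 + x)^m` lies between `exp (m x / (1 + x))` and
`exp (m x)`.
-/

open Filter Real Topology

namespace Real

theorem exp_mul_div_one_add_le_one_add_pow {x : ℝ} (hx : -1 < x) (m : ℕ) :
    exp (m * (x / (1 + x))) ≤ (1 + x) ^ m := by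
  have hpos : 0 < 1 + x := by linarith
  have hlog : x / (1 + x) ≤ log (1 + x) := by
    have h := one_sub_inv_le_log_of_pos hpos
    have : 1 - (1 + x)⁻¹ = x / (1 + x) := by field_simp; ring
    rwa [this] at h
  rw [exp_nat_mul]
  conv_rhs => rw [← exp_log hpos]
  gcongr

theorem one_add_pow_le_exp_mul {x : ℝ} (hx : -1 ≤ x) (m : ℕ) :
    (1 + x) ^ m ≤ exp (m * x) := by
  rw [exp_nat_mul]
  exact pow_le_pow_left₀ (by linarith) (by linarith [add_one_le_exp x]) m

theorem tendsto_one_add_pow_exp_of_tendsto_mul {ι : Type*} {l : Filter ι} {m : ι → ℕ}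
    {x : ι → ℝ} {t : ℝ} (hx : Tendsto x l (𝓝 0)) (hmx : Tendsto (fun i ↦ m i * x i) l (𝓝 t)) :
    Tendsto (fun i ↦ (1 + x i) ^ m i) l (𝓝 (exp t)) := by
  have hx_gt : ∀ᶠ i in l, -1 < x i := hx.eventually_const_lt (by norm_num)
  have hlower : Tendsto (fun i ↦ m i * (x i / (1 + x i))) l (𝓝 t) := by
    have := hmx.div (tendsto_const_nhds.add hx) (by norm_num : (1 : ℝ) + 0 ≠ 0)
    rw [add_zero, div_one] at this
    exact this.congr fun i ↦ mul_div_assoc _ _ _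
  refine tendsto_of_tendsto_of_tendsto_of_le_of_le' ((continuous_exp.tendsto t).comp hlower)
    ((continuous_exp.tendsto t).comp hmx) ?_ ?_
  · filter_upwards [hx_gt] with i hi using exp_mul_div_one_add_le_one_add_pow hi (m i)
  · filter_upwards [hx_gt] with i hi using one_add_pow_le_exp_mul hi.le (m i)

theorem tendsto_cos_pow_exp_of_tendsto_mul_sq {ι : Type*} {l : Filter ι} {m : ι → ℕ}
    {θ : ι → ℝ} {L : ℝ} (hθ : Tendsto θ l (𝓝 0))
    (hmθ : Tendsto (fun i ↦ m i * θ i ^ 2 / 2) l (𝓝 L)) :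
    Tendsto (fun i ↦ cos (θ i) ^ m i) l (𝓝 (exp (-L))) := by
  have hcos : Tendsto (fun i ↦ cos (θ i) - 1) l (𝓝 0) := by
    simpa using ((continuous_cos.tendsto 0).comp hθ).sub_const 1
  have hrem : Tendsto (fun i ↦ m i * (cos (θ i) - (1 - θ i ^ 2 / 2))) l (𝓝 0) := by
    refine squeeze_zero_norm' ?_ (by simpa using ((hmθ.const_mul (5 / 48)).mul (hθ.pow 2)))
    filter_upwards [hθ.eventually (Metric.closedBall_mem_nhds 0 one_pos)] with i hi
    have hi : |θ i| ≤ 1 := by simpa using hi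
    rw [norm_mul, Real.norm_natCast]
    calc (m i : ℝ) * ‖cos (θ i) - (1 - θ i ^ 2 / 2)‖ ≤ m i * (|θ i| ^ 4 * (5 / 96)) := by
          gcongr; exact cos_bound hi
      _ = 5 / 48 * (m i * θ i ^ 2 / 2) * θ i ^ 2 := by
          rw [show |θ i| ^ 4 = θ i ^ 4 by rw [pow_abs, abs_of_nonneg (by positivity)]]; ring
  have := tendsto_one_add_pow_exp_of_tendsto_mul hcos (t := -L)
    (by simpa using hrem.sub hmθ |>.congr fun i ↦ by ring)
  simpa using this

end Real

section PBTAngle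

variable {ι : Type*} {l : Filter ι} {n k : ι → ℝ}

theorem pi_div_div_add_two_eq {n k : ℝ} (hn : 0 < n) (hk : 0 < k) :
    π / (n / k + 2) = π * (k / n) / (1 + 2 * (k / n)) := by
  field_simp

theorem tendsto_pi_div_div_add_two (hn : ∀ᶠ i in l, 0 < n i) (hk : ∀ᶠ i in l, 0 < k i)
    (hkn : Tendsto (fun i ↦ k i / n i) l (𝓝 0)) :
    Tendsto (fun i ↦ π / (n i / k i + 2)) l (𝓝 0) := by
  have := (hkn.const_mul π).div ((hkn.const_mul 2).const_add 1) (by norm_num)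
  rw [mul_zero, zero_div] at this
  refine this.congr' ?_
  filter_upwards [hn, hk] with i hni hki using (pi_div_div_add_two_eq hni hki).symm

theorem tendsto_mul_pi_div_div_add_two_sq {b : ℝ} (hn : ∀ᶠ i in l, 0 < n i)
    (hk : ∀ᶠ i in l, 0 < k i) (hkn : Tendsto (fun i ↦ k i / n i) l (𝓝 0))
    (hb : Tendsto (fun i ↦ k i ^ 3 / n i ^ 2) l (𝓝 b)) :
    Tendsto (fun i ↦ k i * (π / (n i / k i + 2)) ^ 2) l (𝓝 (π ^ 2 * b)) := by
  have := (hb.const_mul (π ^ 2)).div (((hkn.const_mul 2).const_add 1).pow 2) (by norm_num)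
  rw [mul_zero, add_zero, one_pow, div_one] at this
  refine this.congr' ?_
  filter_upwards [hn, hk] with i hni hki
  rw [Pi.div_apply, pi_div_div_add_two_eq hni hki]
  field_simp

end PBTAngle

theorem tendsto_nat_floor_mul_rpow_div_rpow {a p : ℝ} (ha : 0 ≤ a) (hp : 0 < p) :
    Tendsto (fun N : ℕ ↦ (⌊a * (N : ℝ) ^ p⌋₊ : ℝ) / (N : ℝ) ^ p) atTop (𝓝 a) :=
  (tendsto_nat_floor_mul_div_atTop ha).comp
    ((tendsto_rpow_atTop hp).comp tendsto_natCast_atTop_atTop)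

theorem tendsto_div_self_of_tendsto_div_rpow {k : ℕ → ℝ} {a p : ℝ} (hp : p < 1)
    (h : Tendsto (fun N : ℕ ↦ k N / (N : ℝ) ^ p) atTop (𝓝 a)) :
    Tendsto (fun N : ℕ ↦ k N / N) atTop (𝓝 0) := by
  have hdecay : Tendsto (fun N : ℕ ↦ (N : ℝ) ^ (-(1 - p))) atTop (𝓝 0) :=
    (tendsto_rpow_neg_atTop (by linarith)).comp tendsto_natCast_atTop_atTop
  have := h.mul hdecay
  rw [mul_zero] at this
  refine this.congr' ?_
  filter_upwards [eventually_gt_atTop 0] with N hN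
  have hN : (0 : ℝ) < N := by exact_mod_cast hN
  rw [rpow_neg hN.le, ← div_eq_mul_inv, div_div, ← rpow_add hN]
  norm_num

theorem stmt_9 (a : ℝ) (ha : 0 < a) :
    Tendsto (fun N : ℕ =>
        (Real.cos (Real.pi / ((N : ℝ) / (⌊a * (N : ℝ) ^ ((2 : ℝ) / 3)⌋₊ : ℝ) + 2))) ^
          (2 * ⌊a * (N : ℝ) ^ ((2 : ℝ) / 3)⌋₊))
      atTop (nhds (Real.exp (-(Real.pi ^ 2 * a ^ 3)))) := by
  set k : ℕ → ℕ := fun N ↦ ⌊a * (N : ℝ) ^ ((2 : ℝ) / 3)⌋₊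
  have hc : Tendsto (fun N : ℕ ↦ (k N : ℝ) / (N : ℝ) ^ ((2 : ℝ) / 3)) atTop (𝓝 a) :=
    tendsto_nat_floor_mul_rpow_div_rpow ha.le (by norm_num)
  have hN_pos : ∀ᶠ N : ℕ in atTop, (0 : ℝ) < N :=
    tendsto_natCast_atTop_atTop.eventually_gt_atTop 0
  have hk_pos : ∀ᶠ N in atTop, (0 : ℝ) < k N := by
    filter_upwards [hc.eventually_const_lt ha] with N hN
    exact (Nat.cast_nonneg _).lt_of_ne fun h ↦ by rw [← h, zero_div] at hN; linarith
  have hk3 : Tendsto (fun N : ℕ ↦ (k N : ℝ) ^ 3 / (N : ℝ) ^ 2) atTop (𝓝 (a ^ 3)) := by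
    refine (hc.pow 3).congr' ?_
    filter_upwards [hN_pos] with N hN
    rw [div_pow, ← rpow_natCast ((N : ℝ) ^ _), ← rpow_mul hN.le]
    norm_num
  have hkN := tendsto_div_self_of_tendsto_div_rpow (by norm_num) hc
  have hθ := tendsto_pi_div_div_add_two hN_pos hk_pos hkN
  have hkθ := tendsto_mul_pi_div_div_add_two_sq hN_pos hk_pos hkN hk3
  exact tendsto_cos_pow_exp_of_tendsto_mul_sq (m := fun N ↦ 2 * k N) hθ
    (hkθ.congr fun N ↦ by push_cast; ring)
end

section
/- For real a > 0, 2·∫₀^∞ x²·(1/√(2π))·e^{-(x+a)²/2} dx = (1+a²)·(1 - erf(a/√2)) - a·√(2/π)·e^{-a²/2}, where erf is the error function. In particular this quantity is strictly decreasing in a and tends to 0 as a → ∞. -/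
open MeasureTheory Real Filter

/-- The Gauss error function. -/
noncomputable def erf (x : ℝ) : ℝ :=
  (2 / Real.sqrt Real.pi) * ∫ t in Set.Ioc (0 : ℝ) x, Real.exp (-t ^ 2)

/-!
Substituting `t = x + a` turns the integral into `∫_a^∞ (t - a)² e^{-t²/2} dt`, and
`(t - a)² = (t² - 1) + (1 + a²) - 2at`. The first and last pieces integrate in closed form, since
`(t² - 1) e^{-t²/2}` and `t e^{-t²/2}` are the derivatives of `-t e^{-t²/2}` and `-e^{-t²/2}`; the
middle one is the Gaussian tail `√(π/2) (1 - erf (a/√2))`.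

Monotonicity and the limit are read off the integrand instead: `e^{-(x+a)²/2}` decreases strictly
in `a` for `x > 0`, and `(x + a)² ≥ x² + a²` for `x, a ≥ 0` bounds the integral by `e^{-a²/2}`
times its value at `a = 0`.
-/

open Set Topology

theorem setIntegral_strictMono_on {X : Type*} [MeasurableSpace X] {μ : Measure X} {s : Set X}
    {f g : X → ℝ} (hf : IntegrableOn f s μ) (hg : IntegrableOn g s μ) (hs : MeasurableSet s)
    (hμs : μ s ≠ 0) (h : ∀ x ∈ s, f x < g x) :
    ∫ x in s, f x ∂μ < ∫ x in s, g x ∂μ := by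
  have hsupp : Function.support (g - f) ∩ s = s :=
    inter_eq_right.mpr fun x hx => (sub_pos.mpr (h x hx)).ne'
  rw [← sub_pos, ← integral_sub hg hf]
  refine (setIntegral_pos_iff_support_of_nonneg_ae (f := g - f) ?_ (hg.sub hf)).mpr ?_
  · filter_upwards [ae_restrict_mem hs] with x hx using (sub_pos.mpr (h x hx)).le
  · rwa [hsupp, pos_iff_ne_zero]

theorem integral_Ioi_comp_add_right {E : Type*} [NormedAddCommGroup E] [NormedSpace ℝ E]
    (f : ℝ → E) (b a : ℝ) : ∫ x in Ioi b, f (x + a) = ∫ x in Ioi (b + a), f x := by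
  have h := (measurePreserving_add_right volume a).setIntegral_preimage_emb
    (measurableEmbedding_addRight a) f (Ioi (b + a))
  rwa [preimage_add_const_Ioi, add_sub_cancel_right] at h

theorem integrable_pow_mul_exp_neg_sq_div_two (n : ℕ) :
    Integrable fun t : ℝ => t ^ n * exp (-t ^ 2 / 2) := by
  have h := integrable_rpow_mul_exp_neg_mul_sq (b := 1 / 2) (by norm_num) (s := n)
    (by linarith [n.cast_nonneg (α := ℝ)])
  simp only [rpow_natCast] at h
  convert h using 4
  ring

theorem tendsto_pow_mul_exp_neg_sq_div_two_atTop (n : ℕ) :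
    Tendsto (fun t : ℝ => t ^ n * exp (-t ^ 2 / 2)) atTop (𝓝 0) := by
  refine ((tendsto_rpow_abs_mul_exp_neg_mul_sq_cocompact (a := 1 / 2) (by norm_num) n).mono_left
    atTop_le_cocompact).congr' ?_
  filter_upwards [eventually_ge_atTop 0] with t ht
  rw [abs_of_nonneg ht, rpow_natCast]
  congr 2
  ring

theorem integrable_sq_mul_exp_neg_sq_add_div_two (a : ℝ) :
    Integrable fun x : ℝ => x ^ 2 * exp (-(x + a) ^ 2 / 2) := by
  have h : Integrable fun t : ℝ => (t - a) ^ 2 * exp (-t ^ 2 / 2) := by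
    refine (((integrable_pow_mul_exp_neg_sq_div_two 2).sub
      ((integrable_pow_mul_exp_neg_sq_div_two 1).const_mul (2 * a))).add
      ((integrable_pow_mul_exp_neg_sq_div_two 0).const_mul (a ^ 2))).congr
      (ae_of_all _ fun t => ?_)
    simp only [Pi.add_apply, Pi.sub_apply]
    ring
  simpa using h.comp_add_right a

theorem hasDerivAt_exp_neg_sq_div_two (t : ℝ) :
    HasDerivAt (fun t => exp (-t ^ 2 / 2)) (-t * exp (-t ^ 2 / 2)) t := by
  have h : HasDerivAt (fun t : ℝ => -t ^ 2 / 2) (-t) t :=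
    ((hasDerivAt_pow 2 t).fun_neg.div_const 2).congr_deriv (by ring)
  simpa [mul_comm] using h.exp

theorem integral_Ioi_mul_exp_neg_sq_div_two (a : ℝ) :
    ∫ t in Ioi a, t * exp (-t ^ 2 / 2) = exp (-a ^ 2 / 2) := by
  have hderiv : ∀ t ∈ Ici a, HasDerivAt (fun t => -exp (-t ^ 2 / 2)) (t * exp (-t ^ 2 / 2)) t :=
    fun t _ => by simpa using (hasDerivAt_exp_neg_sq_div_two t).fun_neg
  have hlim := (tendsto_pow_mul_exp_neg_sq_div_two_atTop 0).neg
  simp only [pow_zero, one_mul, neg_zero] at hlim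
  simpa using integral_Ioi_of_hasDerivAt_of_tendsto' hderiv
    (by simpa using (integrable_pow_mul_exp_neg_sq_div_two 1).integrableOn) hlim

theorem integrable_sq_sub_one_mul_exp_neg_sq_div_two :
    Integrable fun t : ℝ => (t ^ 2 - 1) * exp (-t ^ 2 / 2) := by
  refine ((integrable_pow_mul_exp_neg_sq_div_two 2).sub
    (integrable_pow_mul_exp_neg_sq_div_two 0)).congr (ae_of_all _ fun t => ?_)
  simp only [Pi.sub_apply]
  ring

theorem integral_Ioi_sq_sub_one_mul_exp_neg_sq_div_two (a : ℝ) :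
    ∫ t in Ioi a, (t ^ 2 - 1) * exp (-t ^ 2 / 2) = a * exp (-a ^ 2 / 2) := by
  have hderiv : ∀ t ∈ Ici a,
      HasDerivAt (fun t => -(t * exp (-t ^ 2 / 2))) ((t ^ 2 - 1) * exp (-t ^ 2 / 2)) t :=
    fun t _ => ((hasDerivAt_id' t).fun_mul (hasDerivAt_exp_neg_sq_div_two t)).fun_neg.congr_deriv
      (by ring)
  have hlim := (tendsto_pow_mul_exp_neg_sq_div_two_atTop 1).neg
  simp only [pow_one, neg_zero] at hlim
  simpa using integral_Ioi_of_hasDerivAt_of_tendsto' hderiv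
    (integrable_sq_sub_one_mul_exp_neg_sq_div_two).integrableOn hlim

theorem integral_Ioc_exp_neg_sq_div_two {a : ℝ} (ha : 0 ≤ a) :
    ∫ t in Ioc 0 a, exp (-t ^ 2 / 2) = √(2 * π) / 2 * erf (a / √2) := by
  have hsqrt2 : (0 : ℝ) < √2 := by positivity
  have hscale := intervalIntegral.integral_comp_div (a := 0) (b := a)
    (fun t => exp (-t ^ 2)) hsqrt2.ne'
  simp only [div_pow, sq_sqrt zero_le_two, zero_div] at hscale
  rw [erf, ← intervalIntegral.integral_of_le ha, ← intervalIntegral.integral_of_le (by positivity)]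
  simp only [neg_div, hscale, smul_eq_mul, sqrt_mul zero_le_two]
  field_simp

theorem integral_Ioi_exp_neg_sq_div_two {a : ℝ} (ha : 0 ≤ a) :
    ∫ t in Ioi a, exp (-t ^ 2 / 2) = √(2 * π) / 2 * (1 - erf (a / √2)) := by
  have htotal : ∫ t in Ioi 0, exp (-t ^ 2 / 2) = √(2 * π) / 2 := by
    have h := integral_gaussian_Ioi (1 / 2)
    rw [div_div_eq_mul_div, div_one, mul_comm] at h
    simpa [neg_div, div_eq_inv_mul] using h
  have hsplit := setIntegral_union (s := Ioc 0 a) (Ioc_disjoint_Ioi le_rfl) measurableSet_Ioi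
    (integrable_pow_mul_exp_neg_sq_div_two 0).integrableOn
    (integrable_pow_mul_exp_neg_sq_div_two 0).integrableOn (μ := volume)
  simp only [pow_zero, one_mul, Ioc_union_Ioi_eq_Ioi ha, htotal,
    integral_Ioc_exp_neg_sq_div_two ha] at hsplit
  linarith

theorem integral_Ioi_sq_mul_exp_neg_sq_add_div_two {a : ℝ} (ha : 0 ≤ a) :
    ∫ x in Ioi 0, x ^ 2 * exp (-(x + a) ^ 2 / 2) =
      (1 + a ^ 2) * (√(2 * π) / 2 * (1 - erf (a / √2))) - a * exp (-a ^ 2 / 2) := by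
  have hshift := integral_Ioi_comp_add_right (fun t => (t - a) ^ 2 * exp (-t ^ 2 / 2)) 0 a
  simp only [add_sub_cancel_right, zero_add] at hshift
  have hE : IntegrableOn (fun t => exp (-t ^ 2 / 2)) (Ioi a) := by
    simpa using (integrable_pow_mul_exp_neg_sq_div_two 0).integrableOn
  have hT : IntegrableOn (fun t => t * exp (-t ^ 2 / 2)) (Ioi a) := by
    simpa using (integrable_pow_mul_exp_neg_sq_div_two 1).integrableOn
  have hJ := integrable_sq_sub_one_mul_exp_neg_sq_div_two.integrableOn (s := Ioi a)
  calc ∫ x in Ioi 0, x ^ 2 * exp (-(x + a) ^ 2 / 2)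
      = ∫ t in Ioi a, ((t ^ 2 - 1) * exp (-t ^ 2 / 2) + (1 + a ^ 2) * exp (-t ^ 2 / 2)
          - 2 * a * (t * exp (-t ^ 2 / 2))) := by
        rw [hshift]
        exact integral_congr_ae (ae_of_all _ fun t => by ring)
    _ = (∫ t in Ioi a, (t ^ 2 - 1) * exp (-t ^ 2 / 2))
          + (1 + a ^ 2) * (∫ t in Ioi a, exp (-t ^ 2 / 2))
          - 2 * a * ∫ t in Ioi a, t * exp (-t ^ 2 / 2) := by
        rw [integral_sub, integral_add hJ (hE.const_mul _), integral_const_mul, integral_const_mul]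
        · exact hJ.add (hE.const_mul _)
        · exact hT.const_mul _
    _ = _ := by
        rw [integral_Ioi_sq_sub_one_mul_exp_neg_sq_div_two, integral_Ioi_exp_neg_sq_div_two ha,
          integral_Ioi_mul_exp_neg_sq_div_two]
        ring

theorem strictAntiOn_integral_Ioi_sq_mul_exp_neg_sq_add_div_two :
    StrictAntiOn (fun a => ∫ x in Ioi 0, x ^ 2 * exp (-(x + a) ^ 2 / 2)) (Ici 0) := by
  intro a (ha : 0 ≤ a) b _ hab
  refine setIntegral_strictMono_on (integrable_sq_mul_exp_neg_sq_add_div_two b).integrableOn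
    (integrable_sq_mul_exp_neg_sq_add_div_two a).integrableOn measurableSet_Ioi (by simp)
    fun x (hx : 0 < x) => ?_
  have hsq : (x + a) ^ 2 < (x + b) ^ 2 := by nlinarith
  gcongr

theorem tendsto_integral_Ioi_sq_mul_exp_neg_sq_add_div_two_atTop :
    Tendsto (fun a => ∫ x in Ioi 0, x ^ 2 * exp (-(x + a) ^ 2 / 2)) atTop (𝓝 0) := by
  set C := ∫ x in Ioi 0, x ^ 2 * exp (-x ^ 2 / 2)
  have hbound (a : ℝ) (ha : 0 ≤ a) :
      ∫ x in Ioi 0, x ^ 2 * exp (-(x + a) ^ 2 / 2) ≤ exp (-a ^ 2 / 2) * C := by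
    rw [← integral_const_mul]
    refine setIntegral_mono_on (integrable_sq_mul_exp_neg_sq_add_div_two a).integrableOn
      ((integrable_pow_mul_exp_neg_sq_div_two 2).integrableOn.const_mul _) measurableSet_Ioi
      fun x (hx : 0 < x) => ?_
    rw [mul_left_comm, ← exp_add]
    gcongr
    nlinarith
  have hlim := (tendsto_pow_mul_exp_neg_sq_div_two_atTop 0).mul_const C
  simp only [pow_zero, one_mul, zero_mul] at hlim
  exact squeeze_zero' (.of_forall fun a => setIntegral_nonneg measurableSet_Ioi fun x _ => by
    positivity) ((eventually_ge_atTop 0).mono hbound) hlim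

theorem stmt_15 :
    (∀ a : ℝ, 0 < a →
      2 * ∫ x in Set.Ioi (0 : ℝ),
          x ^ 2 * (1 / Real.sqrt (2 * Real.pi)) * Real.exp (-(x + a) ^ 2 / 2) =
        (1 + a ^ 2) * (1 - erf (a / Real.sqrt 2)) -
          a * Real.sqrt (2 / Real.pi) * Real.exp (-a ^ 2 / 2)) ∧
    StrictAntiOn (fun a : ℝ =>
        2 * ∫ x in Set.Ioi (0 : ℝ),
          x ^ 2 * (1 / Real.sqrt (2 * Real.pi)) * Real.exp (-(x + a) ^ 2 / 2))
      (Set.Ioi 0) ∧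
    Tendsto (fun a : ℝ =>
        2 * ∫ x in Set.Ioi (0 : ℝ),
          x ^ 2 * (1 / Real.sqrt (2 * Real.pi)) * Real.exp (-(x + a) ^ 2 / 2))
      atTop (nhds 0) := by
  simp_rw [mul_right_comm _ (1 / √(2 * π)), integral_mul_const]
  refine ⟨fun a ha => ?_, fun a ha b hb hab => ?_, ?_⟩
  · have hsqrt : √(2 / π) = 2 / √(2 * π) := by
      rw [show 2 / π = 2 ^ 2 / (2 * π) by field_simp, sqrt_div (by norm_num), sqrt_sq zero_le_two]
    rw [integral_Ioi_sq_mul_exp_neg_sq_add_div_two ha.le, hsqrt]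
    field_simp
  · have := strictAntiOn_integral_Ioi_sq_mul_exp_neg_sq_add_div_two
      (Ioi_subset_Ici_self ha) (Ioi_subset_Ici_self hb) hab
    dsimp only at this ⊢
    gcongr
  · simpa using
      (tendsto_integral_Ioi_sq_mul_exp_neg_sq_add_div_two_atTop.mul_const (1 / √(2 * π))).const_mul 2
end
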